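/- arXiv:2102.09465 — 2 statements merged into one kernel-verified Lean document; each statement's English description precedes it below -/
import Mathlib

section
/- Let b, b' > 0 be given. Then there exists B₀ = B₀(b, b') such that uniformly for X ≥ 1 one has ∑_{n ≤ X, ω(n) > B₀ log log X} b^{ω(n)} = O(X (log 2X)^{−b'}). -/
/-!
Rankin's trick: if `ω(n) > B₀ log log X` then `b ^ ω(n) ≤ (log X) ^ (-B₀) (e b) ^ ω(n)`, so it
suffices to bound `∑_{n ≤ X} u ^ ω(n)` for `u ≥ 1`. Expanding
`u ^ ω(n) = ∑_{S ⊆ primeFactors n} (u - 1) ^ |S|` and counting the multiples of `∏ S` gives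
`∑_{n ≤ X} u ^ ω(n) ≤ X ∏_{p ≤ X} (1 + (u - 1) / p) ≤ X exp ((u - 1) ∑_{p ≤ X} 1 / p)`.
Chebyshev's bound `θ(x) ≤ x log 4` on dyadic blocks gives `∑_{p ≤ X} 1 / p ≤ 9 + 4 log (1 + log X)`,
so the sum is `≪ X (log X) ^ (4 (u - 1) - B₀)`, and `B₀ = 4 (u - 1) + b'` works.
-/

open Finset Real Chebyshev

theorem sum_inv_primes_Ioc_two_pow_le {k : ℕ} (hk : 1 ≤ k) :
    ∑ p ∈ Ioc (2 ^ k : ℕ) (2 ^ (k + 1)) with p.Prime, (p : ℝ)⁻¹ ≤ 4 / k := by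
  set F := {p ∈ Ioc (2 ^ k : ℕ) (2 ^ (k + 1)) | p.Prime}
  set c : ℝ := k * log 2 * 2 ^ k
  have hc : 0 < c := by positivity
  -- `p > 2 ^ k` bounds both `1 / p` from above and `log p` from below
  have hterm : ∀ p ∈ F, (p : ℝ)⁻¹ ≤ log p / c := by
    intro p hp
    simp only [F, mem_filter, mem_Ioc] at hp
    have hp2 : (2 : ℝ) ^ k ≤ p := by exact_mod_cast hp.1.1.le
    have hlog : k * log 2 ≤ log p := by
      rw [← Real.log_pow]; exact Real.log_le_log (by positivity) hp2
    rw [le_div_iff₀ hc, inv_mul_eq_div, div_le_iff₀ (by exact_mod_cast hp.2.pos)]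
    calc c = k * log 2 * 2 ^ k := rfl
      _ ≤ log p * p := by gcongr
  have htheta : ∑ p ∈ F, log (p : ℝ) ≤ θ (2 ^ (k + 1)) := by
    rw [theta, show ⌊(2 : ℝ) ^ (k + 1)⌋₊ = 2 ^ (k + 1) from mod_cast Nat.floor_natCast _]
    refine sum_le_sum_of_subset_of_nonneg
      (filter_subset_filter _ (Ioc_subset_Ioc_left (by positivity))) fun p hp _ => ?_
    exact log_nonneg (by exact_mod_cast (mem_filter.1 hp).2.one_lt.le)
  calc ∑ p ∈ F, (p : ℝ)⁻¹ ≤ ∑ p ∈ F, log (p : ℝ) / c := sum_le_sum hterm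
    _ ≤ θ (2 ^ (k + 1)) / c := by rw [← sum_div]; gcongr
    _ ≤ log 4 * 2 ^ (k + 1) / c := by gcongr; exact theta_le_log4_mul_x (by positivity)
    _ = 4 / k := by
      rw [show (4 : ℝ) = 2 ^ 2 by norm_num, Real.log_pow]
      field_simp
      ring

theorem sum_inv_primes_Ioc_one_two_pow_le (K : ℕ) :
    ∑ p ∈ Ioc (1 : ℕ) (2 ^ (K + 1)) with p.Prime, (p : ℝ)⁻¹
      ≤ 1 / 2 + 4 * harmonic K := by
  induction K with
  | zero => norm_num [show Ioc 1 2 = {2} by rfl, filter_singleton, Nat.prime_two]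
  | succ K ih =>
    have hsplit := sum_Ioc_consecutive (fun p : ℕ => if p.Prime then (p : ℝ)⁻¹ else 0)
      (Nat.one_le_two_pow : 1 ≤ 2 ^ (K + 1)) (Nat.pow_le_pow_right two_pos (K + 1).le_succ)
    simp only [← sum_filter] at hsplit
    rw [← hsplit, harmonic_succ]
    have hdyadic := sum_inv_primes_Ioc_two_pow_le (Nat.succ_pos K)
    push_cast at hdyadic ⊢
    linarith [div_eq_mul_inv (4 : ℝ) (K + 1)]

theorem sum_inv_primesLE_le {N : ℕ} (hN : 1 ≤ N) :
    ∑ p ∈ Nat.primesLE N, (p : ℝ)⁻¹ ≤ 9 + 4 * log (1 + log N) := by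
  set K := Nat.log 2 N
  have hlogN : 0 ≤ log N := log_nonneg (by exact_mod_cast hN)
  have hsub : Nat.primesLE N ⊆ {p ∈ Ioc (1 : ℕ) (2 ^ (K + 1)) | p.Prime} := by
    intro p hp
    rw [Nat.mem_primesLE] at hp
    have : N < 2 ^ (K + 1) := Nat.lt_pow_succ_log_self one_lt_two N
    simp only [mem_filter, mem_Ioc]
    exact ⟨⟨hp.2.one_lt, by omega⟩, hp.2⟩
  have hK : (K : ℝ) ≤ 2 * (1 + log N) := by
    have hpow : ((2 ^ K : ℕ) : ℝ) ≤ N := by exact_mod_cast Nat.pow_log_le_self 2 (by omega)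
    have := log_le_log (by positivity) hpow
    rw [Nat.cast_pow, Real.log_pow, Nat.cast_ofNat] at this
    nlinarith [log_two_gt_d9]
  have hlogK : log K ≤ log 2 + log (1 + log N) := by
    rcases K.eq_zero_or_pos with h0 | h0
    · rw [h0, Nat.cast_zero, log_zero]
      linarith [log_nonneg (by linarith : (1 : ℝ) ≤ 1 + log N), log_nonneg one_le_two]
    · rw [← log_mul two_ne_zero (by positivity)]
      exact log_le_log (by exact_mod_cast h0) hK
  have hH : (harmonic K : ℝ) ≤ 1 + log K := by exact_mod_cast harmonic_le_one_add_log K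
  have hlog2 : log 2 ≤ 1 := by linarith [log_le_sub_one_of_pos two_pos]
  calc ∑ p ∈ Nat.primesLE N, (p : ℝ)⁻¹
      ≤ ∑ p ∈ Ioc (1 : ℕ) (2 ^ (K + 1)) with p.Prime, (p : ℝ)⁻¹ :=
        sum_le_sum_of_subset_of_nonneg hsub fun _ _ _ => by positivity
    _ ≤ 1 / 2 + 4 * harmonic K := sum_inv_primes_Ioc_one_two_pow_le K
    _ ≤ 9 + 4 * log (1 + log N) := by linarith

theorem card_filter_subset_primeFactors {S : Finset ℕ} (hS : ∀ p ∈ S, p.Prime) (N : ℕ) :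
    #{n ∈ Icc 1 N | S ⊆ n.primeFactors} = N / ∏ p ∈ S, p := by
  have hdvd : ∀ n ∈ Icc 1 N, S ⊆ n.primeFactors ↔ ∏ p ∈ S, p ∣ n := by
    intro n hn
    have := Nat.prod_primeFactors_dvd_iff (n := ∏ p ∈ S, p) (k := n) (by grind)
    rw [Nat.primeFactors_prod hS] at this
    exact this.symm
  rw [filter_congr hdvd]
  exact Nat.Ioc_filter_dvd_card_eq_div N _

theorem sum_one_add_pow_card_primeFactors_le {t : ℝ} (ht : 0 ≤ t) (N : ℕ) :
    ∑ n ∈ Icc 1 N, (1 + t) ^ #n.primeFactors ≤ N * ∏ p ∈ Nat.primesLE N, (1 + t / p) := by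
  have hprime : ∀ p ∈ Nat.primesLE N, p.Prime := fun p hp => (Nat.mem_primesLE.1 hp).2
  have hpf : ∀ n ∈ Icc 1 N, n.primeFactors ⊆ Nat.primesLE N := fun n hn p hp =>
    Nat.mem_primesLE.2 ⟨(Nat.le_of_mem_primeFactors hp).trans (mem_Icc.1 hn).2,
      Nat.prime_of_mem_primeFactors hp⟩
  calc ∑ n ∈ Icc 1 N, (1 + t) ^ #n.primeFactors
      = ∑ n ∈ Icc 1 N, ∑ S ∈ n.primeFactors.powerset, t ^ #S := by
        refine sum_congr rfl fun n _ => ?_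
        rw [add_comm, ← sum_pow_mul_eq_add_pow]
        simp
    _ = ∑ S ∈ (Nat.primesLE N).powerset,
          ∑ n ∈ Icc 1 N with S ⊆ n.primeFactors, t ^ #S := by
        refine sum_comm' fun n S => ?_
        simp only [mem_powerset, mem_filter]
        exact ⟨fun ⟨hn, hS⟩ => ⟨⟨hn, hS⟩, hS.trans (hpf n hn)⟩, fun h => h.1⟩
    _ = ∑ S ∈ (Nat.primesLE N).powerset, ((N / ∏ p ∈ S, p : ℕ) : ℝ) * t ^ #S := by
        refine sum_congr rfl fun S hS => ?_
        rw [sum_const, nsmul_eq_mul, card_filter_subset_primeFactors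
          fun p hp => hprime p (mem_powerset.1 hS hp)]
    _ ≤ ∑ S ∈ (Nat.primesLE N).powerset, N * ∏ p ∈ S, t / p := by
        refine sum_le_sum fun S _ => ?_
        have hdiv : ((N / ∏ p ∈ S, p : ℕ) : ℝ) ≤ N / ∏ p ∈ S, (p : ℝ) := by
          rw [← Nat.cast_prod]; exact Nat.cast_div_le
        calc ((N / ∏ p ∈ S, p : ℕ) : ℝ) * t ^ #S
            ≤ N / (∏ p ∈ S, (p : ℝ)) * t ^ #S := by gcongr
          _ = N * ∏ p ∈ S, t / p := by rw [prod_div_distrib, prod_const]; ring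
    _ = N * ∏ p ∈ Nat.primesLE N, (1 + t / p) := by rw [prod_one_add, mul_sum]

theorem sum_pow_card_primeFactors_le {u X : ℝ} (hu : 1 ≤ u) (hX : 1 ≤ X) :
    ∑ n ∈ Icc 1 ⌊X⌋₊, u ^ #n.primeFactors
      ≤ X * exp (9 * (u - 1)) * (1 + log X) ^ (4 * (u - 1)) := by
  set t := u - 1 with ht_def
  have ht : 0 ≤ t := by linarith
  set N := ⌊X⌋₊
  have hN : 1 ≤ N := Nat.le_floor (by exact_mod_cast hX)
  have hNX : (N : ℝ) ≤ X := Nat.floor_le (by linarith)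
  have hlogN : 0 ≤ log N := log_nonneg (by exact_mod_cast hN)
  have hlogNX : log N ≤ log X := log_le_log (by positivity) hNX
  calc ∑ n ∈ Icc 1 N, u ^ #n.primeFactors
      = ∑ n ∈ Icc 1 N, (1 + t) ^ #n.primeFactors := by rw [ht_def, add_sub_cancel]
    _ ≤ N * ∏ p ∈ Nat.primesLE N, (1 + t / p) := sum_one_add_pow_card_primeFactors_le ht N
    _ ≤ N * exp (t * ∑ p ∈ Nat.primesLE N, (p : ℝ)⁻¹) := by
        rw [mul_sum]
        gcongr
        exact prod_one_add_le_exp_sum _ fun p => by positivity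
    _ ≤ X * exp (t * (9 + 4 * log (1 + log X))) := by
        gcongr
        calc ∑ p ∈ Nat.primesLE N, (p : ℝ)⁻¹
            ≤ 9 + 4 * log (1 + log N) := sum_inv_primesLE_le hN
          _ ≤ 9 + 4 * log (1 + log X) := by gcongr
    _ = X * exp (9 * t) * (1 + log X) ^ (4 * t) := by
        rw [rpow_def_of_pos (by linarith), mul_assoc, ← exp_add]
        ring_nf

theorem pow_le_rpow_neg_mul_exp_one_mul_pow {x M s : ℝ} {m : ℕ} (hx : 0 ≤ x) (hM : 0 < M)
    (h : s * log M ≤ m) : x ^ m ≤ M ^ (-s) * (exp 1 * x) ^ m := by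
  rw [mul_pow, exp_one_pow, rpow_def_of_pos hM, ← mul_assoc, ← exp_add]
  exact le_mul_of_one_le_left (by positivity) (one_le_exp (by linarith))

/- `max 1 (log X)` stands in for `log X`, so that small `X`, where `log (log X)` is negative,
need no separate case. -/
theorem sum_filter_pow_card_primeFactors_le {b s X : ℝ} (hb : 0 ≤ b) (N : ℕ) :
    ∑ n ∈ Icc 1 N with s * log (log X) < #n.primeFactors, b ^ #n.primeFactors
      ≤ max 1 (log X) ^ (-s) * ∑ n ∈ Icc 1 N, (exp 1 * max b 1) ^ #n.primeFactors := by
  have hM : 0 < max 1 (log X) := zero_lt_one.trans_le (le_max_left _ _)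
  have hrankin : ∀ n ∈ {n ∈ Icc 1 N | s * log (log X) < #n.primeFactors},
      b ^ #n.primeFactors ≤ max 1 (log X) ^ (-s) * (exp 1 * max b 1) ^ #n.primeFactors := by
    intro n hn
    refine (pow_le_pow_left₀ hb (le_max_left b 1) _).trans
      (pow_le_rpow_neg_mul_exp_one_mul_pow (zero_le_one.trans (le_max_right b 1)) hM ?_)
    rcases le_total 1 (log X) with h | h
    · rw [max_eq_right h]; exact (mem_filter.1 hn).2.le
    · rw [max_eq_left h, log_one, mul_zero]; positivity
  rw [mul_sum]
  exact (sum_le_sum hrankin).trans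
    (sum_le_sum_of_subset_of_nonneg (filter_subset _ _) fun _ _ _ => by positivity)

theorem max_one_log_rpow_mul_one_add_log_rpow_le {X t s : ℝ} (hX : 1 ≤ X) (ht : 0 ≤ t)
    (hs : 0 ≤ s) :
    max 1 (log X) ^ (-(t + s)) * (1 + log X) ^ t ≤ 2 ^ t * 2 ^ s * log (2 * X) ^ (-s) := by
  set M := max 1 (log X)
  have hM : 0 < M := zero_lt_one.trans_le (le_max_left _ _)
  have hlog2X : 0 < log (2 * X) := log_pos (by linarith)
  have hlog2X_le : log (2 * X) ≤ 2 * M := by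
    rw [log_mul two_ne_zero (by linarith)]
    linarith [log_le_sub_one_of_pos two_pos, le_max_right 1 (log X), le_max_left 1 (log X)]
  calc M ^ (-(t + s)) * (1 + log X) ^ t ≤ M ^ (-(t + s)) * (2 * M) ^ t := by
        gcongr
        · linarith [log_nonneg hX]
        · linarith [le_max_right 1 (log X), le_max_left 1 (log X)]
    _ = 2 ^ t * M ^ (-s) := by
        rw [mul_rpow zero_le_two hM.le, neg_add, rpow_add hM, rpow_neg hM.le t]
        have : M ^ t ≠ 0 := by positivity
        field_simp
    _ ≤ 2 ^ t * (log (2 * X) / 2) ^ (-s) := by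
        refine mul_le_mul_of_nonneg_left ?_ (by positivity)
        exact rpow_le_rpow_of_nonpos (by positivity) (by linarith) (by linarith)
    _ = 2 ^ t * 2 ^ s * log (2 * X) ^ (-s) := by
        rw [div_rpow hlog2X.le zero_le_two, rpow_neg zero_le_two, div_inv_eq_mul]
        ring

open scoped Classical in
/-- For `b, b' > 0` there exists `B₀ = B₀(b, b')` such that uniformly for `X ≥ 1`,
`∑_{n ≤ X, ω(n) > B₀ log log X} b^{ω(n)} = O(X (log 2X)^{-b'})`, where `ω(n)` is the
number of distinct prime factors of `n`. -/
theorem sum_pow_omega_many_prime_factors_le (b b' : ℝ) (hb : 0 < b) (hb' : 0 < b') :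
    ∃ B₀ : ℝ, ∃ C : ℝ, 0 < C ∧ ∀ X : ℝ, 1 ≤ X →
      ∑ n ∈ (Finset.Icc 1 ⌊X⌋₊).filter
          (fun n => B₀ * Real.log (Real.log X) < (n.primeFactors.card : ℝ)),
        b ^ n.primeFactors.card
        ≤ C * X * Real.log (2 * X) ^ (-b') := by
  set u := exp 1 * max b 1
  have hu : 1 ≤ u := one_le_mul_of_one_le_of_one_le (one_le_exp zero_le_one) (le_max_right b 1)
  set t := u - 1
  have ht : 0 ≤ t := sub_nonneg.2 hu
  refine ⟨4 * t + b', exp (9 * t) * 2 ^ (4 * t) * 2 ^ b', by positivity, fun X hX => ?_⟩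
  calc ∑ n ∈ Icc 1 ⌊X⌋₊ with (4 * t + b') * log (log X) < #n.primeFactors,
        b ^ #n.primeFactors
      ≤ max 1 (log X) ^ (-(4 * t + b')) * ∑ n ∈ Icc 1 ⌊X⌋₊, u ^ #n.primeFactors :=
        sum_filter_pow_card_primeFactors_le hb.le _
    _ ≤ max 1 (log X) ^ (-(4 * t + b')) * (X * exp (9 * t) * (1 + log X) ^ (4 * t)) := by
        gcongr
        exact sum_pow_card_primeFactors_le hu hX
    _ = X * exp (9 * t) * (max 1 (log X) ^ (-(4 * t + b')) * (1 + log X) ^ (4 * t)) := by ring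
    _ ≤ X * exp (9 * t) * (2 ^ (4 * t) * 2 ^ b' * log (2 * X) ^ (-b')) := by
        refine mul_le_mul_of_nonneg_left ?_ (by positivity)
        exact max_one_log_rpow_mul_one_add_log_rpow_le hX (by positivity) hb'.le
    _ = exp (9 * t) * 2 ^ (4 * t) * 2 ^ b' * X * log (2 * X) ^ (-b') := by ring
end

section
/- Let ℓ be an odd prime, let K = ℚ_ℓ(ζ_ℓ) and let L be the unramified extension of K of degree ℓ, so that the residue field of L is 𝔽_{ℓ^ℓ} and ζ_ℓ − 1 is a uniformizer of L. Let α ∈ 𝒪_L be an element whose expansion α = d₀ + d₁(ζ_ℓ − 1) + d₂(ζ_ℓ − 1)² + ⋯ in powers of ζ_ℓ − 1, with digits d_i the Teichmüller lifts of the residue field 𝔽_{ℓ^ℓ} in L, satisfies: the reduction of d₀ lies in 𝔽_ℓ \ {0} and the reduction of d₁ does not lie in 𝔽_ℓ (inside 𝔽_{ℓ^ℓ}). Then α is not an ℓ-th power in L. -/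
lemma sq_dvd_pow_sub_pow {R : Type*} [CommRing R] (lam x y : R) (n : ℕ)
    (h1 : lam ∣ x - y) (h2 : lam ∣ (n : R)) : lam ^ 2 ∣ x ^ n - y ^ n := by
  rw [← geom_sum₂_mul x y n, pow_two]
  refine mul_dvd_mul ?_ h1
  have key : (∑ i ∈ Finset.range n, x ^ i * y ^ (n - 1 - i))
      = (∑ i ∈ Finset.range n, (x ^ i - y ^ i) * y ^ (n - 1 - i)) + n * y ^ (n - 1) := by
    have h : ∀ i ∈ Finset.range n,
        x ^ i * y ^ (n - 1 - i) = (x ^ i - y ^ i) * y ^ (n - 1 - i) + y ^ (n - 1) := by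
      intro i hi
      have hi' : i ≤ n - 1 := Nat.le_pred_of_lt (Finset.mem_range.mp hi)
      have hy : y ^ i * y ^ (n - 1 - i) = y ^ (n - 1) := by
        rw [← pow_add, Nat.add_sub_cancel' hi']
      rw [sub_mul, hy]; ring
    rw [Finset.sum_congr rfl h, Finset.sum_add_distrib, Finset.sum_const,
      Finset.card_range, nsmul_eq_mul]
  rw [key]
  exact dvd_add (Finset.dvd_sum fun i _ => dvd_mul_of_dvd_left
    (h1.trans (sub_dvd_pow_sub_pow x y i)) _) (h2.mul_right _)



variable (p : ℕ) [Fact p.Prime]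

noncomputable instance instAlgPadicIntIF
    (L : IntermediateField ℚ_[p] (AlgebraicClosure ℚ_[p])) : Algebra ℤ_[p] ↥L :=
  ((algebraMap ℚ_[p] ↥L).comp (algebraMap ℤ_[p] ℚ_[p])).toAlgebra

instance instTowerPadicIntIF (L : IntermediateField ℚ_[p] (AlgebraicClosure ℚ_[p])) :
    IsScalarTower ℤ_[p] ℚ_[p] ↥L :=
  IsScalarTower.of_algebraMap_eq' rfl

set_option synthInstance.maxHeartbeats 1000000 in
set_option maxHeartbeats 2000000 in
/-- **Units with a non-rational second Teichmüller digit are not `ℓ`-th powers.**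
Let `ℓ` be an odd prime, and let `L ⊆ ℚ_ℓ-bar` be the unramified extension of degree `ℓ`
of `K = ℚ_ℓ(ζ_ℓ)`:  a field of degree `ℓ(ℓ−1)` over `ℚ_ℓ` containing a primitive `ℓ`-th
root of unity `ζ`, in which `λ = ζ − 1` is a uniformizer of the ring of integers
`𝒪_L` (the integral closure of `ℤ_ℓ` in `L`) and the residue field has `ℓ^ℓ` elements.
Let `α ∈ 𝒪_L` have Teichmüller expansion `α = d₀ + d₁·λ + O(λ²)` (the digits being roots
of `x^{ℓ^ℓ} = x`), where the reduction of `d₀` lies in `𝔽_ℓ \ {0}` (that is, `λ ∤ d₀` and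
`λ ∣ d₀^ℓ − d₀`) and the reduction of `d₁` does not lie in `𝔽_ℓ` (that is,
`λ ∤ d₁^ℓ − d₁`).  Then `α` is not an `ℓ`-th power in `L`. -/
theorem not_pow_of_teichmuller_digits
    (ℓ : ℕ) [Fact ℓ.Prime] (hodd : Odd ℓ)
    (L : IntermediateField ℚ_[ℓ] (AlgebraicClosure ℚ_[ℓ])) [FiniteDimensional ℚ_[ℓ] ↥L]
    (hdeg : Module.finrank ℚ_[ℓ] ↥L = ℓ * (ℓ - 1))
    (ζ : AlgebraicClosure ℚ_[ℓ]) (hζ : IsPrimitiveRoot ζ ℓ) (hζL : ζ ∈ L)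
    (lam : integralClosure ℤ_[ℓ] ↥L)
    (hlam : (lam : ↥L) = ⟨ζ, hζL⟩ - 1)
    -- `λ = ζ − 1` is a uniformizer of `𝒪_L`:
    (hlam_nonunit : ¬ IsUnit lam)
    (hlam_unif : ∀ x : integralClosure ℤ_[ℓ] ↥L, ¬ IsUnit x → lam ∣ x)
    -- the residue field of `L` is `𝔽_{ℓ^ℓ}`:
    (hres : Nat.card
      ((integralClosure ℤ_[ℓ] ↥L) ⧸ (Ideal.span {lam} : Ideal (integralClosure ℤ_[ℓ] ↥L)))
        = ℓ ^ ℓ)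
    (α d₀ d₁ : integralClosure ℤ_[ℓ] ↥L)
    -- `d₀`, `d₁` are Teichmüller lifts:
    (hd₀T : d₀ ^ (ℓ ^ ℓ) = d₀) (hd₁T : d₁ ^ (ℓ ^ ℓ) = d₁)
    -- `α = d₀ + d₁λ + O(λ²)`:
    (hα : lam ^ 2 ∣ α - d₀ - d₁ * lam)
    -- the reduction of `d₀` lies in `𝔽_ℓ \ {0}`:
    (hd₀ne : ¬ lam ∣ d₀) (hd₀F : lam ∣ d₀ ^ ℓ - d₀)
    -- the reduction of `d₁` does not lie in `𝔽_ℓ`: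
    (hd₁F : ¬ lam ∣ d₁ ^ ℓ - d₁) :
    ∀ β : ↥L, β ^ ℓ ≠ (α : ↥L) := by
  intro β hβ
  have hℓp : ℓ.Prime := Fact.out
  -- lift β to the ring of integers
  have hβint : IsIntegral ℤ_[ℓ] β := by
    refine IsIntegral.of_pow hℓp.pos ?_
    rw [hβ]
    exact α.2
  set b : integralClosure ℤ_[ℓ] ↥L := ⟨β, hβint⟩ with hbdef
  have hb : b ^ ℓ = α := by
    apply Subtype.ext
    push_cast
    exact hβ
  have hImax : (Ideal.span {lam} : Ideal (integralClosure ℤ_[ℓ] ↥L)).IsMaximal := by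
    rw [Ideal.isMaximal_iff]
    constructor
    · intro h1
      exact hlam_nonunit (isUnit_of_dvd_one (Ideal.mem_span_singleton.mp h1))
    · intro J x _ hxI hxJ
      have hxu : IsUnit x := by
        by_contra hxu
        exact hxI (Ideal.mem_span_singleton.mpr (hlam_unif x hxu))
      obtain ⟨u, rfl⟩ := hxu
      have h1J : ((u⁻¹ : (integralClosure ℤ_[ℓ] ↥L)ˣ) : integralClosure ℤ_[ℓ] ↥L) * u ∈ J :=
        J.mul_mem_left _ hxJ
      rwa [Units.inv_mul] at h1J
  haveI := hImax
  letI : Field ((integralClosure ℤ_[ℓ] ↥L) ⧸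
      (Ideal.span {lam} : Ideal (integralClosure ℤ_[ℓ] ↥L))) := Ideal.Quotient.field _
  haveI : Finite ((integralClosure ℤ_[ℓ] ↥L) ⧸
      (Ideal.span {lam} : Ideal (integralClosure ℤ_[ℓ] ↥L))) :=
    Nat.finite_of_card_ne_zero (by rw [hres]; exact pow_ne_zero _ hℓp.ne_zero)
  haveI : Fintype ((integralClosure ℤ_[ℓ] ↥L) ⧸
      (Ideal.span {lam} : Ideal (integralClosure ℤ_[ℓ] ↥L))) := Fintype.ofFinite _
  have hcard : Fintype.card ((integralClosure ℤ_[ℓ] ↥L) ⧸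
      (Ideal.span {lam} : Ideal (integralClosure ℤ_[ℓ] ↥L))) = ℓ ^ ℓ := by
    rw [← Nat.card_eq_fintype_card]; exact hres
  -- characteristic of the residue field is ℓ
  have hql0 : ((ℓ ^ ℓ : ℕ) : (integralClosure ℤ_[ℓ] ↥L) ⧸
      (Ideal.span {lam} : Ideal (integralClosure ℤ_[ℓ] ↥L))) = 0 := by
    rw [← hcard]; exact Nat.cast_card_eq_zero _
  have hchar : ringChar ((integralClosure ℤ_[ℓ] ↥L) ⧸
      (Ideal.span {lam} : Ideal (integralClosure ℤ_[ℓ] ↥L))) = ℓ := by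
    have h1 := ringChar.dvd hql0
    haveI := ringChar.charP ((integralClosure ℤ_[ℓ] ↥L) ⧸
      (Ideal.span {lam} : Ideal (integralClosure ℤ_[ℓ] ↥L)))
    have h2 := CharP.char_is_prime ((integralClosure ℤ_[ℓ] ↥L) ⧸
      (Ideal.span {lam} : Ideal (integralClosure ℤ_[ℓ] ↥L)))
      (ringChar ((integralClosure ℤ_[ℓ] ↥L) ⧸
      (Ideal.span {lam} : Ideal (integralClosure ℤ_[ℓ] ↥L))))
    exact (Nat.prime_dvd_prime_iff_eq h2 hℓp).mp (h2.dvd_of_dvd_pow h1)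
  haveI hCQ : CharP ((integralClosure ℤ_[ℓ] ↥L) ⧸
      (Ideal.span {lam} : Ideal (integralClosure ℤ_[ℓ] ↥L))) ℓ :=
    ringChar.of_eq hchar
  have hll : lam ∣ ((ℓ : ℕ) : integralClosure ℤ_[ℓ] ↥L) := by
    rw [← Ideal.mem_span_singleton, ← Ideal.Quotient.eq_zero_iff_mem, map_natCast]
    exact CharP.cast_eq_zero _ ℓ
  have hlq : lam ∣ ((ℓ ^ ℓ : ℕ) : integralClosure ℤ_[ℓ] ↥L) :=
    hll.trans (Nat.cast_dvd_cast (dvd_pow_self ℓ hℓp.ne_zero))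
  -- every element satisfies x^q ≡ x mod lam
  have hpow : ∀ x : integralClosure ℤ_[ℓ] ↥L, lam ∣ x ^ (ℓ ^ ℓ) - x := by
    intro x
    rw [← Ideal.mem_span_singleton, ← Ideal.Quotient.eq_zero_iff_mem, map_sub, map_pow,
      sub_eq_zero]
    have hfp := FiniteField.pow_card (Ideal.Quotient.mk
      (Ideal.span {lam} : Ideal (integralClosure ℤ_[ℓ] ↥L)) x)
    rwa [hcard] at hfp
  -- key congruences mod lam²
  have h3 : lam ^ 2 ∣ (b ^ (ℓ ^ ℓ)) ^ ℓ - b ^ ℓ :=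
    sq_dvd_pow_sub_pow lam _ b ℓ (hpow b) hll
  have h4 : lam ^ 2 ∣ α ^ (ℓ ^ ℓ) - d₀ := by
    have h1 : lam ∣ α - d₀ := by
      have he : α - d₀ = (α - d₀ - d₁ * lam) + d₁ * lam := by ring
      rw [he]
      exact dvd_add ((dvd_pow_self lam two_ne_zero).trans hα) (Dvd.intro_left d₁ rfl)
    have h2 := sq_dvd_pow_sub_pow lam α d₀ (ℓ ^ ℓ) h1 hlq
    rwa [hd₀T] at h2
  have h5 : lam ^ 2 ∣ α ^ (ℓ ^ ℓ) - α := by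
    have he : α ^ (ℓ ^ ℓ) - α = (b ^ (ℓ ^ ℓ)) ^ ℓ - b ^ ℓ := by
      rw [← hb, ← pow_mul, mul_comm ℓ (ℓ ^ ℓ), pow_mul]
    rw [he]; exact h3
  have h6 : lam ^ 2 ∣ d₁ * lam := by
    have he : d₁ * lam = (α ^ (ℓ ^ ℓ) - d₀) - (α ^ (ℓ ^ ℓ) - α) - (α - d₀ - d₁ * lam) := by
      ring
    rw [he]
    exact dvd_sub (dvd_sub h4 h5) hα
  -- conclude
  have hlamne : lam ≠ 0 := by
    intro h0
    have hz : (lam : ↥L) = 0 := by rw [h0]; rfl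
    rw [hlam, sub_eq_zero] at hz
    exact (hζ.ne_one hℓp.one_lt) (congrArg Subtype.val hz)
  have hld₁ : lam ∣ d₁ := by
    rw [pow_two, mul_comm d₁ lam] at h6
    exact (mul_dvd_mul_iff_left hlamne).mp h6
  exact hd₁F (dvd_sub (hld₁.trans (dvd_pow_self d₁ hℓp.ne_zero)) hld₁)
end
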